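/- arXiv:0911.0186 — 3 statements merged into one kernel-verified Lean document; each statement's English description precedes it below -/
import Mathlib

section
/- The lamplighter group L = ℤ/2 ≀ ℤ does not split over a 2-ended (virtually ℤ) group: whenever L acts on a tree without inversions such that the base group A = ⊕_{i∈ℤ} ℤ/2 fixes a vertex v, then either A fixes an edge incident to v (if t·v ≠ v, using that t A t⁻¹ = A) or L fixes the vertex v; in either case no edge stabilizer of the action is a 2-ended group, since A is infinite locally finite and hence not virtually ℤ, and edge stabilizers contain A or equal L-stabilizers containing A. -/
noncomputable section

/-- The shift automorphism of the base group `ℤ →₀ ZMod 2`. -/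
def lampShift : (ℤ →₀ ZMod 2) ≃+ (ℤ →₀ ZMod 2) :=
  Finsupp.domCongr (Equiv.addRight (1 : ℤ))

/-- The action of `ℤ` on the base group by shifting. -/
def lampAct : Multiplicative ℤ →* MulAut (Multiplicative (ℤ →₀ ZMod 2)) :=
  zpowersHom _ (AddEquiv.toMultiplicative lampShift)

/-- The lamplighter group `ℤ/2 ≀ ℤ`. -/
abbrev Lamp : Type :=
  (Multiplicative (ℤ →₀ ZMod 2)) ⋊[lampAct] (Multiplicative ℤ)

/-- The element `a = (δ₀, 0)`. -/
def lampA : Lamp := SemidirectProduct.inl (Multiplicative.ofAdd (Finsupp.single (0 : ℤ) (1 : ZMod 2)))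

/-- The element `t = (0, 1)`. -/
def lampT : Lamp := SemidirectProduct.inr (Multiplicative.ofAdd (1 : ℤ))


/-- A group is virtually `ℤ` (equivalently, 2-ended) if it has a finite-index
subgroup isomorphic to `ℤ`. -/
def IsVirtuallyZ (G : Type*) [Group G] : Prop :=
  ∃ H : Subgroup G, H.FiniteIndex ∧ Nonempty (H ≃* Multiplicative ℤ)

/-- Every element of the base group has order dividing 2. -/
lemma lamp_inl_sq (n : Multiplicative (ℤ →₀ ZMod 2)) :
    (SemidirectProduct.inl n : Lamp) * SemidirectProduct.inl n = 1 := by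
  rw [← map_mul, ← map_one (SemidirectProduct.inl : _ →* Lamp)]
  congr 1
  rw [← ofAdd_toAdd n, ← ofAdd_add, ← ofAdd_zero]
  congr 1
  ext i
  simp [CharTwo.add_self_eq_zero]

/-- The base group is normalized by `t`. -/
lemma lamp_conj_mem (a : Lamp)
    (ha : a ∈ (SemidirectProduct.inl : Multiplicative (ℤ →₀ ZMod 2) →* Lamp).range) :
    lampT⁻¹ * a * lampT ∈
      (SemidirectProduct.inl : Multiplicative (ℤ →₀ ZMod 2) →* Lamp).range := by
  obtain ⟨n, rfl⟩ := ha
  exact ⟨(lampAct (Multiplicative.ofAdd (1 : ℤ)))⁻¹ n, by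
    rw [SemidirectProduct.inl_aut_inv, lampT, map_inv]⟩

lemma lamp_inr_eq (m : ℤ) :
    (SemidirectProduct.inr (Multiplicative.ofAdd m) : Lamp) = lampT ^ m := by
  rw [lampT, ← map_zpow]
  congr 1
  rw [← ofAdd_zsmul, smul_eq_mul, mul_one]

/-- the lamplighter group does not split over a 2-ended group. -/
theorem lamplighter_no_splitting_over_two_ended :
    ∀ (V : Type) (T : SimpleGraph V), T.IsTree →
      ∀ [MulAction Lamp V],
        (∀ (g : Lamp) (v w : V), T.Adj v w → T.Adj (g • v) (g • w)) →
        (∀ (g : Lamp) (v w : V), T.Adj v w → ¬(g • v = w ∧ g • w = v)) →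
        ∀ v : V,
          (∀ g ∈ (SemidirectProduct.inl :
              Multiplicative (ℤ →₀ ZMod 2) →* Lamp).range, g • v = v) →
          ((lampT • v ≠ v →
              ∃ w : V, T.Adj v w ∧
                (SemidirectProduct.inl :
                  Multiplicative (ℤ →₀ ZMod 2) →* Lamp).range ≤
                  MulAction.stabilizer Lamp v ⊓ MulAction.stabilizer Lamp w) ∧
            (lampT • v = v → ∀ g : Lamp, g • v = v)) ∧
          ∀ p q : V, T.Adj p q →
            (SemidirectProduct.inl :
              Multiplicative (ℤ →₀ ZMod 2) →* Lamp).range ≤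
              MulAction.stabilizer Lamp p ⊓ MulAction.stabilizer Lamp q →
            ¬ IsVirtuallyZ
              (MulAction.stabilizer Lamp p ⊓ MulAction.stabilizer Lamp q :
                Subgroup Lamp) := by
  intro V T htree _inst hAdj _hInv v hAv
  constructor
  · constructor
    · -- Case `t • v ≠ v`
      intro hne
      obtain ⟨-, hup⟩ := SimpleGraph.isTree_iff_existsUnique_path.mp htree
      obtain ⟨p, hp, huniq⟩ := hup v (lampT • v)
      obtain ⟨w, hvw, q, rfl⟩ := SimpleGraph.Walk.exists_eq_cons_of_ne (Ne.symm hne) p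
      refine ⟨w, hvw, ?_⟩
      intro a ha
      have hav : a • v = v := hAv a ha
      have hatv : a • (lampT • v) = lampT • v := by
        have h2 := hAv _ (lamp_conj_mem a ha)
        calc a • (lampT • v) = (a * lampT) • v := (mul_smul _ _ _).symm
          _ = (lampT * (lampT⁻¹ * a * lampT)) • v := by group
          _ = lampT • ((lampT⁻¹ * a * lampT) • v) := mul_smul _ _ _
          _ = lampT • v := by rw [h2]
      -- transport the path by `a` and use uniqueness
      let f : T →g T := ⟨fun x => a • x, fun h => hAdj a _ _ h⟩
      have hinj : Function.Injective (f : V → V) := MulAction.injective a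
      have hmp : (((SimpleGraph.Walk.cons hvw q).map f).copy hav hatv).IsPath := by
        rw [SimpleGraph.Walk.isPath_copy]
        exact SimpleGraph.Walk.map_isPath_of_injective hinj hp
      have heq := huniq _ hmp
      have hs := congrArg SimpleGraph.Walk.support heq
      rw [SimpleGraph.Walk.support_copy, SimpleGraph.Walk.support_map,
        SimpleGraph.Walk.support_cons, q.support_eq_cons] at hs
      simp only [List.map_cons, List.cons.injEq] at hs
      have haw : a • w = w := hs.2.1
      exact Subgroup.mem_inf.mpr ⟨hav, haw⟩
    · -- Case `t • v = v`
      intro hfix g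
      have ht : lampT ∈ MulAction.stabilizer Lamp v := hfix
      have hinr : (SemidirectProduct.inr g.right : Lamp) • v = v := by
        have : (g.right : Multiplicative ℤ)
            = Multiplicative.ofAdd (Multiplicative.toAdd g.right) := rfl
        rw [this, lamp_inr_eq]
        exact (MulAction.stabilizer Lamp v).zpow_mem ht _
      calc g • v = (SemidirectProduct.inl g.left * SemidirectProduct.inr g.right) • v := by
            rw [SemidirectProduct.inl_left_mul_inr_right]
        _ = SemidirectProduct.inl g.left • (SemidirectProduct.inr g.right • v) :=
            mul_smul _ _ _
        _ = SemidirectProduct.inl g.left • v := by rw [hinr]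
        _ = v := hAv _ ⟨g.left, rfl⟩
  · -- no edge stabilizer is virtually ℤ
    intro p q _hpq hle hvz
    set S := MulAction.stabilizer Lamp p ⊓ MulAction.stabilizer Lamp q with hS
    obtain ⟨H, hfin, ⟨e⟩⟩ := hvz
    set A' : Subgroup S :=
      ((SemidirectProduct.inl : Multiplicative (ℤ →₀ ZMod 2) →* Lamp).range).subgroupOf S
      with hA'
    have hinfA' : Infinite A' := by
      refine Infinite.of_injective (fun n : Multiplicative (ℤ →₀ ZMod 2) =>
        (⟨⟨SemidirectProduct.inl n, hle ⟨n, rfl⟩⟩,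
          Subgroup.mem_subgroupOf.mpr ⟨n, rfl⟩⟩ : A')) ?_
      intro x y h
      exact SemidirectProduct.inl_injective
        (congrArg (fun z : A' => ((z : S) : Lamp)) h)
    have hK : H.subgroupOf A' = ⊥ := by
      rw [eq_bot_iff]
      intro x hx
      have hxmem : ((x : S) : Lamp) ∈
          (SemidirectProduct.inl : Multiplicative (ℤ →₀ ZMod 2) →* Lamp).range :=
        Subgroup.mem_subgroupOf.mp x.2
      obtain ⟨n, hn⟩ := hxmem
      have hx2 : (x : S) * (x : S) = 1 := by
        apply Subtype.ext
        show ((x : S) : Lamp) * ((x : S) : Lamp) = 1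
        rw [← hn]
        exact lamp_inl_sq n
      have hxH : (x : S) ∈ H := Subgroup.mem_subgroupOf.mp hx
      have h1 : (⟨(x : S), hxH⟩ : H) * ⟨(x : S), hxH⟩ = 1 := Subtype.ext hx2
      have h2 : e ⟨(x : S), hxH⟩ * e ⟨(x : S), hxH⟩ = 1 := by
        rw [← map_mul, h1, map_one]
      have h3 : e ⟨(x : S), hxH⟩ = 1 := by
        have := congrArg Multiplicative.toAdd h2
        rw [toAdd_mul, toAdd_one] at this
        have : Multiplicative.toAdd (e ⟨(x : S), hxH⟩) = 0 := by omega
        rw [← ofAdd_toAdd (e ⟨(x : S), hxH⟩), this, ofAdd_zero]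
      have h4 : (⟨(x : S), hxH⟩ : H) = 1 := by
        apply e.injective
        rw [h3, map_one]
      have h5 : (x : S) = 1 := congrArg Subtype.val h4
      exact Subgroup.mem_bot.mpr (Subtype.ext h5)
    haveI : H.FiniteIndex := hfin
    haveI : (H.subgroupOf A').FiniteIndex := Subgroup.instFiniteIndex_subgroupOf H A'
    have hne := this.index_ne_zero
    rw [hK, Subgroup.index_bot] at hne
    exact hne (Nat.card_eq_zero_of_infinite)

end
end

section
/- In the lamplighter group with generators {a,t}, for any element g = (c,k): any word in the generators representing g, read as a walk of the cursor starting at 0, must visit every position in supp(c); consequently the word length of (c,k) is at least the length of the shortest walk on ℤ starting at 0, ending at k, and visiting all points of supp(c), plus |supp(c)|. -/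
noncomputable section

/-- The element `(c, k)` of the lamplighter group. -/
def lampElt (c : ℤ →₀ ZMod 2) (k : ℤ) : Lamp :=
  SemidirectProduct.inl (Multiplicative.ofAdd c) * SemidirectProduct.inr (Multiplicative.ofAdd k)

/-- Word length with respect to a generating set `S` (inverses allowed). -/
def wordLength {G : Type*} [Group G] (S : Set G) (g : G) : ℕ :=
  sInf {n | ∃ l : List G, l.length = n ∧ (∀ x ∈ l, x ∈ S ∨ x⁻¹ ∈ S) ∧ l.prod = g}

/-- Word metric. -/
def wordDist {G : Type*} [Group G] (S : Set G) (g h : G) : ℕ :=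
  wordLength S (g⁻¹ * h)

end

noncomputable section

/-- The cursor (the `ℤ`-coordinate) of an element of the lamplighter group. -/
def cursor (g : Lamp) : ℤ := Multiplicative.toAdd (SemidirectProduct.rightHom g)

/-- The minimal length of a walk on `ℤ` starting at `0`, ending at `k`, and
visiting every point of `supp c`. -/
def minWalkLength (c : ℤ →₀ ZMod 2) (k : ℤ) : ℕ :=
  sInf {n | ∃ w : List ℤ, w.length = n + 1 ∧ w.head? = some 0 ∧
    w.getLast? = some k ∧ List.Chain' (fun p q => (q - p).natAbs = 1) w ∧
    ∀ i ∈ c.support, i ∈ w}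

/-!
Read a word in `a^{±1}, t^{±1}` letter by letter. The cursor performs a walk on `ℤ` with steps in
`{-1, 0, 1}`: `t^{±1}` moves it and `a^{±1} = a` toggles the lamp under it without moving. Hence
every lit lamp of the product sits at a position the walk visits, and there are at most as many
lit lamps as `a`-letters. Deleting the zero steps leaves a nearest-neighbour walk from `0` to `k`
through `supp c` with one step per `t`-letter; applying this to a shortest word gives the bound.
-/

namespace List

theorem sum_filter_ne_zero {M : Type*} [AddMonoid M] [DecidableEq M] (l : List M) :
    (l.filter (· ≠ 0)).sum = l.sum := by
  induction l with
  | nil => rfl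
  | cons x l ih =>
    by_cases hx : x = 0
    · rw [filter_cons_of_neg (by simpa using hx), ih, sum_cons, hx, zero_add]
    · rw [filter_cons_of_pos (by simpa using hx), sum_cons, sum_cons, ih]

theorem isChain_scanl_add_of_natAbs_eq_one {e : List ℤ} (he : ∀ x ∈ e, x.natAbs = 1) (a : ℤ) :
    (e.scanl (· + ·) a).IsChain (fun p q => (q - p).natAbs = 1) := by
  induction e generalizing a with
  | nil => exact .singleton a
  | cons x e ih =>
    rw [scanl_cons]
    refine (ih (fun y hy => he y (mem_cons_of_mem x hy)) (a + x)).cons ?_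
    simpa [head?_scanl] using he x mem_cons_self

theorem foldl_mem_scanl_of_isPrefix {α β : Type*} {f : β → α → β} {p e : List α} (h : p <+: e)
    (b : β) : p.foldl f b ∈ e.scanl f b := by
  obtain ⟨t, rfl⟩ := h
  induction p generalizing b with
  | nil => exact mem_of_mem_head? head?_scanl
  | cons x p ih =>
    rw [cons_append, scanl_cons, foldl_cons]
    exact mem_cons_of_mem b (ih (f b x))

theorem exists_walk_through_partial_sums (d : List ℤ) (hd : ∀ x ∈ d, x.natAbs ≤ 1) :
    ∃ w : List ℤ, w.head? = some 0 ∧ w.getLast? = some d.sum ∧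
      w.IsChain (fun p q => (q - p).natAbs = 1) ∧ (∀ p, p <+: d → p.sum ∈ w) ∧
      w.length = d.countP (· ≠ 0) + 1 := by
  refine ⟨(d.filter (· ≠ 0)).scanl (· + ·) 0, head?_scanl, ?_, ?_, ?_, ?_⟩
  · rw [getLast?_scanl, ← sum_eq_foldl, sum_filter_ne_zero]
  · refine isChain_scanl_add_of_natAbs_eq_one (fun x hx => ?_) 0
    obtain ⟨hxd, hx0⟩ := by simpa using hx
    have := hd x hxd
    omega
  · intro p hp
    rw [← sum_filter_ne_zero, sum_eq_foldl]
    exact foldl_mem_scanl_of_isPrefix (hp.filter _) 0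
  · rw [length_scanl, countP_eq_length_filter]

end List

open Multiplicative SemidirectProduct

theorem lampAct_ofAdd_apply (n : ℤ) (c : ℤ →₀ ZMod 2) (i : ℤ) :
    toAdd (lampAct (ofAdd n) (ofAdd c)) i = c (i - n) := by
  induction n using Int.induction_on generalizing c i with
  | zero => simp [lampAct]
  | succ n ih =>
    rw [ofAdd_add, map_mul, MulAut.mul_apply, ← ofAdd_toAdd (lampAct (ofAdd 1) _), ih]
    simp [lampAct, lampShift]
    congr 1; ring
  | pred n ih =>
    rw [sub_eq_add_neg, ofAdd_add, map_mul, MulAut.mul_apply,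
      ← ofAdd_toAdd (lampAct (ofAdd (-1)) _), ih]
    simp [lampAct, lampShift, MulAut.inv_def]
    congr 1; ring

def lamps (g : Lamp) : ℤ →₀ ZMod 2 := toAdd g.left

theorem cursor_mul (x y : Lamp) : cursor (x * y) = cursor x + cursor y := by
  simp [cursor]

theorem cursor_list_prod (l : List Lamp) : cursor l.prod = (l.map cursor).sum := by
  induction l with
  | nil => simp [cursor]
  | cons x l ih => rw [List.prod_cons, cursor_mul, ih, List.map_cons, List.sum_cons]

theorem lamps_mul_apply (x y : Lamp) (i : ℤ) :
    lamps (x * y) i = lamps x i + lamps y (i - cursor x) := by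
  rw [lamps, mul_left, toAdd_mul, Finsupp.add_apply, ← ofAdd_toAdd x.right, ← ofAdd_toAdd y.left,
    lampAct_ofAdd_apply]
  rfl

theorem lamps_lampElt (c : ℤ →₀ ZMod 2) (k : ℤ) : lamps (lampElt c k) = c := by
  simp [lamps, lampElt]

theorem cursor_lampElt (c : ℤ →₀ ZMod 2) (k : ℤ) : cursor (lampElt c k) = k := by
  simp [cursor, lampElt]

def IsLampGen (x : Lamp) : Prop := x = lampA ∨ x = lampA⁻¹ ∨ x = lampT ∨ x = lampT⁻¹

theorem IsLampGen.lamps_cursor {x : Lamp} (hx : IsLampGen x) :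
    (lamps x = Finsupp.single 0 1 ∧ cursor x = 0) ∨ (lamps x = 0 ∧ (cursor x).natAbs = 1) := by
  rcases hx with rfl | rfl | rfl | rfl <;>
    simp [lamps, cursor, lampA, lampT, ← map_inv, ZModModule.neg_eq_self]

theorem lamps_mul_of_lamps_eq_single {x g : Lamp} (hg : lamps g = Finsupp.single 0 1) :
    lamps (x * g) = lamps x + Finsupp.single (cursor x) 1 := by
  ext i
  simp only [lamps_mul_apply, hg, Finsupp.add_apply, Finsupp.single_apply, sub_eq_zero, eq_comm]

theorem lamps_mul_of_lamps_eq_zero {x g : Lamp} (hg : lamps g = 0) : lamps (x * g) = lamps x := by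
  ext i
  simp [lamps_mul_apply, hg]

theorem exists_isPrefix_cursor_eq_of_mem_support {l : List Lamp} (hl : ∀ x ∈ l, IsLampGen x)
    {i : ℤ} (hi : i ∈ (lamps l.prod).support) : ∃ p, p <+: l ∧ cursor p.prod = i := by
  induction l using List.reverseRecOn with
  | nil => simp [lamps] at hi
  | append_singleton l g ih =>
    have hl' := fun x hx => hl x (List.mem_append_left _ hx)
    rw [List.prod_append, List.prod_singleton] at hi
    rcases (hl g (by simp)).lamps_cursor with ⟨hg, -⟩ | ⟨hg, -⟩
    · rw [lamps_mul_of_lamps_eq_single hg] at hi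
      rcases Finset.mem_union.mp (Finsupp.support_add hi) with hi | hi
      · obtain ⟨p, hp, rfl⟩ := ih hl' hi
        exact ⟨p, hp.trans (List.prefix_append l [g]), rfl⟩
      · refine ⟨l, List.prefix_append l [g], ?_⟩
        exact (Finset.mem_singleton.mp (Finsupp.support_single_subset hi)).symm
    · rw [lamps_mul_of_lamps_eq_zero hg] at hi
      obtain ⟨p, hp, rfl⟩ := ih hl' hi
      exact ⟨p, hp.trans (List.prefix_append l [g]), rfl⟩

theorem card_support_lamps_prod_le {l : List Lamp} (hl : ∀ x ∈ l, IsLampGen x) :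
    (lamps l.prod).support.card ≤ l.countP (fun x => cursor x = 0) := by
  induction l using List.reverseRecOn with
  | nil => simp [lamps]
  | append_singleton l g ih =>
    have hl' := ih fun x hx => hl x (List.mem_append_left _ hx)
    rw [List.prod_append, List.prod_singleton, List.countP_append]
    rcases (hl g (by simp)).lamps_cursor with ⟨hg, hg0⟩ | ⟨hg, hg1⟩
    · rw [lamps_mul_of_lamps_eq_single hg]
      calc _ ≤ (lamps l.prod).support.card
              + (Finsupp.single (cursor l.prod) (1 : ZMod 2)).support.card :=
            (Finset.card_le_card Finsupp.support_add).trans (Finset.card_union_le _ _)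
        _ ≤ _ := by simp [hg0, hl']
    · rw [lamps_mul_of_lamps_eq_zero hg]
      simpa [show cursor g ≠ 0 by omega] using hl'

theorem closure_lampA_lampT : Subgroup.closure {lampA, lampT} = ⊤ := by
  have hA : lampA ∈ Subgroup.closure {lampA, lampT} := Subgroup.subset_closure (by simp)
  have hT : lampT ∈ Subgroup.closure {lampA, lampT} := Subgroup.subset_closure (by simp)
  have hinr (k : ℤ) : inr (ofAdd k) = lampT ^ k := by
    rw [lampT, ← map_zpow, ← ofAdd_zsmul, smul_eq_mul, mul_one]
  have hinl_single (j : ℤ) :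
      inl (ofAdd (Finsupp.single j 1)) = lampT ^ j * lampA * (lampT ^ j)⁻¹ := by
    rw [← hinr, ← map_inv, lampA, ← inl_aut]
    congr 1
    ext i
    rw [lampAct_ofAdd_apply]
    simp [Finsupp.single_apply, sub_eq_zero, eq_comm]
  have hinl (c : ℤ →₀ ZMod 2) : inl (ofAdd c) ∈ Subgroup.closure {lampA, lampT} := by
    induction c using Finsupp.induction with
    | zero => simp
    | single_add j b c _ hb ih =>
      obtain rfl : b = 1 := by revert b; decide
      rw [ofAdd_add, map_mul, hinl_single]
      exact mul_mem (mul_mem (mul_mem (zpow_mem hT j) hA) (inv_mem (zpow_mem hT j))) ih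
  refine eq_top_iff.mpr fun g _ => ?_
  rw [← inl_left_mul_inr_right g, ← ofAdd_toAdd g.right, hinr]
  exact mul_mem (hinl _) (zpow_mem hT _)

theorem exists_word_length_eq_wordLength {G : Type*} [Group G] {S : Set G}
    (hS : Subgroup.closure S = ⊤) (g : G) :
    ∃ l : List G, l.length = wordLength S g ∧ (∀ x ∈ l, x ∈ S ∨ x⁻¹ ∈ S) ∧ l.prod = g := by
  have hg : g ∈ (Subgroup.closure S).toSubmonoid := by simp [hS]
  rw [Subgroup.closure_toSubmonoid] at hg
  obtain ⟨l, hl, rfl⟩ := Submonoid.exists_list_of_mem_closure hg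
  have hne : {n | ∃ l' : List G, l'.length = n ∧ (∀ x ∈ l', x ∈ S ∨ x⁻¹ ∈ S) ∧
      l'.prod = l.prod}.Nonempty :=
    ⟨l.length, l, rfl, fun x hx => by simpa using hl x hx, rfl⟩
  exact Nat.sInf_mem hne

theorem minWalkLength_lt_length {c : ℤ →₀ ZMod 2} {k : ℤ} {w : List ℤ} (h0 : w.head? = some 0)
    (hk : w.getLast? = some k) (hw : w.IsChain fun p q => (q - p).natAbs = 1)
    (hc : ∀ i ∈ c.support, i ∈ w) : minWalkLength c k < w.length := by
  have hw0 : w ≠ [] := by rintro rfl; simp at h0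
  have : minWalkLength c k ≤ w.length - 1 := Nat.sInf_le ⟨w, by grind, h0, hk, hw, hc⟩
  grind

theorem isLampGen_of_mem_or_inv_mem {x : Lamp}
    (hx : x ∈ ({lampA, lampT} : Set Lamp) ∨ x⁻¹ ∈ ({lampA, lampT} : Set Lamp)) : IsLampGen x := by
  simp only [Set.mem_insert_iff, Set.mem_singleton_iff, inv_eq_iff_eq_inv] at hx
  unfold IsLampGen
  tauto

theorem exists_cursor_walk {l : List Lamp} (hl : ∀ x ∈ l, IsLampGen x) :
    ∃ w : List ℤ, w.head? = some 0 ∧ w.getLast? = some (cursor l.prod) ∧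
      w.IsChain (fun p q => (q - p).natAbs = 1) ∧ (∀ p, p <+: l → cursor p.prod ∈ w) ∧
      w.length = l.countP (fun x => cursor x ≠ 0) + 1 := by
  have hsteps : ∀ d ∈ l.map cursor, d.natAbs ≤ 1 := by
    simp only [List.mem_map]
    rintro _ ⟨x, hx, rfl⟩
    rcases (hl x hx).lamps_cursor with ⟨-, h⟩ | ⟨-, h⟩ <;> omega
  obtain ⟨w, h0, hk, hw, hp, hlen⟩ := (l.map cursor).exists_walk_through_partial_sums hsteps
  refine ⟨w, h0, by rwa [cursor_list_prod], hw, fun p hpl => ?_,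
    by rw [hlen, List.countP_map]; rfl⟩
  rw [cursor_list_prod]
  exact hp _ (hpl.map cursor)

/-- any word in the generators representing `(c,k)` visits, as a
walk of the cursor, every position of `supp c`; hence the word length of
`(c,k)` is at least the minimal length of a walk on `ℤ` from `0` to `k`
visiting `supp c`, plus `|supp c|`. -/
theorem lamplighter_word_visits_support (c : ℤ →₀ ZMod 2) (k : ℤ) :
    (∀ l : List Lamp,
      (∀ x ∈ l, x = lampA ∨ x = lampA⁻¹ ∨ x = lampT ∨ x = lampT⁻¹) →
      l.prod = lampElt c k →
      ∀ i ∈ c.support, ∃ p : List Lamp, p <+: l ∧ cursor p.prod = i) ∧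
    minWalkLength c k + c.support.card ≤
      wordLength ({lampA, lampT} : Set Lamp) (lampElt c k) := by
  have visits : ∀ l : List Lamp, (∀ x ∈ l, IsLampGen x) → l.prod = lampElt c k →
      ∀ i ∈ c.support, ∃ p : List Lamp, p <+: l ∧ cursor p.prod = i := fun l hl hprod i hi =>
    exists_isPrefix_cursor_eq_of_mem_support hl (by rwa [hprod, lamps_lampElt])
  refine ⟨visits, ?_⟩
  obtain ⟨l, hlen, hS, hprod⟩ := exists_word_length_eq_wordLength closure_lampA_lampT (lampElt c k)
  have hl : ∀ x ∈ l, IsLampGen x := fun x hx => isLampGen_of_mem_or_inv_mem (hS x hx)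
  obtain ⟨w, h0, hk, hw, hpre, hwlen⟩ := exists_cursor_walk hl
  rw [hprod, cursor_lampElt] at hk
  have hwalk : minWalkLength c k < w.length := minWalkLength_lt_length h0 hk hw fun i hi => by
    obtain ⟨p, hp, rfl⟩ := visits l hl hprod i hi
    exact hpre p hp
  have hcard := card_support_lamps_prod_le hl
  rw [hprod, lamps_lampElt] at hcard
  have hsplit :
      l.countP (fun x => cursor x = 0) + l.countP (fun x => cursor x ≠ 0) = l.length := by
    simpa using (l.length_eq_countP_add_countP (fun x => cursor x = 0)).symm
  omega

end
end

section
/- Let c_n ∈ ⊕_{i∈ℤ} ℤ/2 be the dyadic encoding of n: c_n(i) is the i-th binary digit of n for i ≥ 0 and c_n(i) = 0 for i < 0. Then the map n ↦ (c_n, 0) ∈ L = ℤ/2 ≀ ℤ satisfies: the word distance d((c_n,0), (c_{n+1},0)) ≤ 4·(⌊log₂(n+1)⌋ + 1) + 2, since c_n and c_{n+1} differ exactly at positions 0,…,k where k is the position of the lowest 0-bit of n. -/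
noncomputable section

/-- The dyadic encoding of `n`: the configuration whose lamp at position
`i ≥ 0` is the `i`-th binary digit of `n` (and `0` at negative positions). -/
def dyadic (n : ℕ) : ℤ →₀ ZMod 2 :=
  (Finset.range (n + 1)).sum fun i =>
    if n.testBit i then Finsupp.single (i : ℤ) 1 else 0

open Multiplicative SemidirectProduct

section WordLength

variable {G : Type*} [Group G] {S : Set G} {m n : ℕ} {g h : G}

/-- `g` is a product of at most `n` letters from `S ∪ S⁻¹`. Unlike `wordLength S g ≤ n`, this also
says that `g` is reachable at all: otherwise `wordLength S g` is the junk value `sInf ∅ = 0`. -/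
def HasWordLengthLE (S : Set G) (n : ℕ) (g : G) : Prop :=
  ∃ l : List G, l.length ≤ n ∧ (∀ x ∈ l, x ∈ S ∨ x⁻¹ ∈ S) ∧ l.prod = g

theorem HasWordLengthLE.wordLength_le (hg : HasWordLengthLE S n g) : wordLength S g ≤ n := by
  obtain ⟨l, hlen, hS, rfl⟩ := hg
  refine (Nat.sInf_le ?_).trans hlen
  exact ⟨l, rfl, hS, rfl⟩

theorem HasWordLengthLE.mono (hg : HasWordLengthLE S m g) (hmn : m ≤ n) :
    HasWordLengthLE S n g := by
  obtain ⟨l, hlen, hS, hprod⟩ := hg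
  exact ⟨l, hlen.trans hmn, hS, hprod⟩

theorem HasWordLengthLE.mul (hg : HasWordLengthLE S m g) (hh : HasWordLengthLE S n h) :
    HasWordLengthLE S (m + n) (g * h) := by
  obtain ⟨l, hl, hlS, rfl⟩ := hg
  obtain ⟨l', hl', hl'S, rfl⟩ := hh
  refine ⟨l ++ l', by simp only [List.length_append]; omega, ?_, List.prod_append⟩
  simpa only [List.mem_append] using fun x hx => hx.elim (hlS x) (hl'S x)

theorem hasWordLengthLE_zero_one : HasWordLengthLE S 0 1 :=
  ⟨[], le_rfl, by simp, List.prod_nil⟩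

theorem hasWordLengthLE_one_of_mem (hg : g ∈ S) : HasWordLengthLE S 1 g :=
  ⟨[g], le_rfl, by simp [hg], List.prod_singleton⟩

theorem hasWordLengthLE_one_of_inv_mem (hg : g⁻¹ ∈ S) : HasWordLengthLE S 1 g :=
  ⟨[g], le_rfl, by simp [hg], List.prod_singleton⟩

end WordLength

theorem lampT_mul_inl_mul_lampT_inv (f : ℤ →₀ ZMod 2) :
    lampT * inl (ofAdd f) * lampT⁻¹ = inl (ofAdd (lampShift f)) := by
  rw [lampT, ← map_inv, ← inl_aut]
  rfl

theorem lampShift_symm_apply (f : ℤ →₀ ZMod 2) (j : ℤ) : lampShift.symm f j = f (j + 1) := by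
  simp [lampShift, Finsupp.domCongr_apply]

theorem lampElt_zero_inv_mul (c c' : ℤ →₀ ZMod 2) :
    (lampElt c 0)⁻¹ * lampElt c' 0 = inl (ofAdd (c' - c)) := by
  simp only [lampElt, ofAdd_zero, map_one, mul_one, ← map_inv, ← map_mul, ← ofAdd_neg,
    ← ofAdd_add, neg_add_eq_sub]

theorem hasWordLengthLE_inl_single_zero (x : ZMod 2) :
    HasWordLengthLE {lampA, lampT} 1 (inl (ofAdd (Finsupp.single 0 x))) := by
  obtain rfl | rfl : x = 0 ∨ x = 1 := by decide +revert
  · rw [Finsupp.single_zero, ofAdd_zero, map_one]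
    exact hasWordLengthLE_zero_one.mono zero_le_one
  · exact hasWordLengthLE_one_of_mem (Set.mem_insert _ _)

theorem hasWordLengthLE_inl_of_support_subset (m : ℕ) {f : ℤ →₀ ZMod 2}
    (hf : f.support ⊆ Finset.Icc 0 (m : ℤ)) :
    HasWordLengthLE {lampA, lampT} (3 * m + 1) (inl (ofAdd f)) := by
  induction m generalizing f with
  | zero =>
    obtain ⟨x, rfl⟩ := Finsupp.support_subset_singleton'.mp (by simpa using hf)
    exact hasWordLengthLE_inl_single_zero x
  | succ m ih =>
    classical
    set g := lampShift.symm (f.erase 0)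
    have hg : g.support ⊆ Finset.Icc 0 (m : ℤ) := by
      intro j hj
      rw [Finsupp.mem_support_iff, lampShift_symm_apply] at hj
      have hj0 : j + 1 ≠ 0 := fun h => hj (h ▸ Finsupp.erase_same)
      rw [Finsupp.erase_ne hj0] at hj
      have hj' := hf (Finsupp.mem_support_iff.mpr hj)
      simp only [Finset.mem_Icc] at hj' ⊢
      omega
    have hdecomp : inl (ofAdd f) =
        inl (ofAdd (Finsupp.single 0 (f 0))) * (lampT * inl (ofAdd g) * lampT⁻¹) := by
      rw [lampT_mul_inl_mul_lampT_inv, AddEquiv.apply_symm_apply, ← map_mul, ← ofAdd_add,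
        Finsupp.single_add_erase]
    rw [hdecomp]
    exact ((hasWordLengthLE_inl_single_zero _).mul
      (((hasWordLengthLE_one_of_mem (by simp)).mul (ih hg)).mul
        (hasWordLengthLE_one_of_inv_mem (by simp)))).mono (by omega)

theorem support_dyadic_subset (n : ℕ) : (dyadic n).support ⊆ Finset.Icc 0 (Nat.log 2 n : ℤ) := by
  classical
  intro j hj
  obtain ⟨i, -, hi⟩ := Finset.mem_biUnion.mp (Finsupp.support_finsetSum hj)
  split_ifs at hi with hbit
  · obtain rfl := Finset.mem_singleton.mp (Finsupp.support_single_subset hi)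
    have := Nat.le_log_of_pow_le one_lt_two (Nat.ge_two_pow_of_testBit hbit)
    simp only [Finset.mem_Icc]
    omega
  · simp at hi

/-- consecutive dyadic configurations are at word distance at
most `4(⌊log₂(n+1)⌋ + 1) + 2`. -/
theorem lamplighter_dyadic_step (n : ℕ) :
    wordDist ({lampA, lampT} : Set Lamp)
        (lampElt (dyadic n) 0) (lampElt (dyadic (n + 1)) 0) ≤
      4 * (Nat.log 2 (n + 1) + 1) + 2 := by
  classical
  have hsupp : (dyadic (n + 1) - dyadic n).support ⊆ Finset.Icc 0 (Nat.log 2 (n + 1) : ℤ) :=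
    Finsupp.support_sub.trans <| Finset.union_subset (support_dyadic_subset _) <|
      (support_dyadic_subset n).trans <|
        Finset.Icc_subset_Icc_right (by exact_mod_cast Nat.log_mono_right n.le_succ)
  have hlen := (hasWordLengthLE_inl_of_support_subset _ hsupp).wordLength_le
  rw [wordDist, lampElt_zero_inv_mul]
  omega

end
end
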